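/- Let α ≥ 0 and β > 0, let W = μ + ω with μ a finite signed Borel measure on ℝ and ω ∈ L^∞(ℝ), and let ε ∈ ℝ. Then for every φ ∈ H¹(ℝ), E_ε(φ) ≥ (3/4)‖φ'‖_{L²}² − ‖φ‖_{L²}² · ((α/2)‖φ‖_{L²}² + |ε| · |μ|(ℝ) + β)² − |ε| · ‖ω‖_{L^∞} · ‖φ‖_{L²}², where |μ|(ℝ) denotes the total variation of μ. In particular e_ε > −∞. -/

import Mathlib

open MeasureTheory Real Filter

noncomputable section

/-- An element of the Sobolev space `H¹(ℝ)` of complex-valued functions, represented by its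
continuous representative together with its (weak) derivative: the function and the derivative
are square integrable, and the function is the indefinite integral of its derivative. -/
structure H1 where
  toFun : ℝ → ℂ
  deriv : ℝ → ℂ
  memL2 : MemLp toFun 2 (volume : Measure ℝ)
  deriv_memL2 : MemLp deriv 2 (volume : Measure ℝ)
  integral_deriv : ∀ x : ℝ, toFun x = toFun 0 + ∫ t in (0:ℝ)..x, deriv t

/-- The `L²(ℝ)` norm. -/
def L2norm (f : ℝ → ℂ) : ℝ := (eLpNorm f 2 (volume : Measure ℝ)).toReal

/-- The one-dimensional Pekar functional
`E₀(φ) = ∫ |φ′|² − (α/2) ∫ |φ|⁴ − β |φ(0)|²`. -/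
def pekarE0 (α β : ℝ) (φ : H1) : ℝ :=
  (∫ x : ℝ, ‖φ.deriv x‖ ^ 2) - α / 2 * (∫ x : ℝ, ‖φ.toFun x‖ ^ 4) - β * ‖φ.toFun 0‖ ^ 2

/-- The ground-state energy `e₀ = inf {E₀(φ) : ‖φ‖₂ = 1}`. -/
def groundE0 (α β : ℝ) : ℝ :=
  sInf { r : ℝ | ∃ φ : H1, L2norm φ.toFun = 1 ∧ pekarE0 α β φ = r }


/-- The integral `∫ f dW` of `f` against `W = μ + ω`, where `μ` is a finite signed Borel
measure on `ℝ` and `ω ∈ L^∞(ℝ)`: it equals `∫ f dμ⁺ − ∫ f dμ⁻ + ∫ ω f dx`. -/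
def Wint (μ : MeasureTheory.SignedMeasure ℝ) (ω : ℝ → ℝ) (f : ℝ → ℝ) : ℝ :=
  (∫ x, f x ∂μ.toJordanDecomposition.posPart) -
    (∫ x, f x ∂μ.toJordanDecomposition.negPart) + ∫ x : ℝ, ω x * f x

/-- The perturbed Pekar functional `E_ε(φ) = E₀(φ) − ε ∫ W |φ|²`. -/
def pekarEps (α β : ℝ) (μ : MeasureTheory.SignedMeasure ℝ) (ω : ℝ → ℝ) (ε : ℝ) (φ : H1) : ℝ :=
  pekarE0 α β φ - ε * Wint μ ω (fun x => ‖φ.toFun x‖ ^ 2)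

/-- The perturbed ground-state energy `e_ε = inf {E_ε(φ) : ‖φ‖₂ = 1}`. -/
def groundEps (α β : ℝ) (μ : MeasureTheory.SignedMeasure ℝ) (ω : ℝ → ℝ) (ε : ℝ) : ℝ :=
  sInf { r : ℝ | ∃ φ : H1, L2norm φ.toFun = 1 ∧ pekarEps α β μ ω ε φ = r }

/-!
`‖φ‖²` is absolutely continuous with derivative `2⟪φ, φ'⟫`. Integrating it from points on either
side of `x` where it is small gives `‖φ x‖² ≤ P := ∫ ‖φ‖ ‖φ'‖`, and `P ≤ ‖φ‖₂ ‖φ'‖₂` by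
Cauchy–Schwarz. Hence the quartic term is at most `P ‖φ‖₂²`, the point term at most `β P` and the
measure part of `W` at most `P |μ|(ℝ)`, so `E_ε(φ) ≥ ‖φ'‖₂² - P C - |ε| ‖ω‖_∞ ‖φ‖₂²` with
`C = (α/2) ‖φ‖₂² + |ε| |μ|(ℝ) + β`. Finally `P C ≤ ‖φ‖₂ ‖φ'‖₂ C ≤ ‖φ'‖₂² / 4 + ‖φ‖₂² C²`.
-/

open scoped RealInnerProductSpace

theorem MeasureTheory.LocallyIntegrable.intervalIntegrable {E : Type*} [NormedAddCommGroup E]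
    {f : ℝ → E} (hf : LocallyIntegrable f) (a b : ℝ) : IntervalIntegrable f volume a b :=
  (hf.integrableOn_isCompact isCompact_uIcc).intervalIntegrable

theorem absolutelyContinuousOnInterval_of_eq_add_integral {u u' : ℝ → ℝ} {a b : ℝ}
    (hu' : IntervalIntegrable u' volume a b) (hu : ∀ x, u x = u a + ∫ t in a..x, u' t) :
    AbsolutelyContinuousOnInterval u a b := by
  rw [funext hu]
  exact (LipschitzWith.const (u a)).lipschitzOnWith.absolutelyContinuousOnInterval.fun_add
    (hu'.absolutelyContinuousOnInterval_intervalIntegral (by simp))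

theorem exists_lt_of_integrableOn_of_measure_eq_top {α : Type*} [MeasurableSpace α]
    {μ : Measure α} {f : α → ℝ} {s : Set α} (hf : IntegrableOn f s μ) (hs : μ s = ⊤)
    {δ : ℝ} (hδ : 0 < δ) : ∃ z ∈ s, f z < δ := by
  by_contra! hge
  have hsub : s ⊆ {x | δ ≤ ‖f x‖} := fun z hz ↦ (hge z hz).trans (Real.le_norm_self _)
  have := (measure_mono hsub).trans_lt (hf.measure_norm_ge_lt_top hδ)
  rw [Measure.restrict_apply_self, hs] at this
  exact lt_irrefl _ this

section Primitive

variable {f f' : ℝ → ℂ} (hf' : LocallyIntegrable f')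
  (hf : ∀ x, f x = f 0 + ∫ t in (0 : ℝ)..x, f' t)
include hf' hf

theorem norm_sq_sub_norm_sq_eq_integral_inner (a b : ℝ) :
    ‖f b‖ ^ 2 - ‖f a‖ ^ 2 = ∫ t in a..b, 2 * ⟪f t, f' t⟫ := by
  have hf_a (x : ℝ) : f x = f a + ∫ t in a..x, f' t := by
    rw [hf x, hf a, add_assoc, intervalIntegral.integral_add_adjacent_intervals
      (hf'.intervalIntegrable _ _) (hf'.intervalIntegrable _ _)]
  have hL (L : ℂ →L[ℝ] ℝ) : AbsolutelyContinuousOnInterval (fun x ↦ L (f x)) a b :=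
    absolutelyContinuousOnInterval_of_eq_add_integral (u' := fun t ↦ L (f' t))
      ⟨L.integrable_comp (hf'.intervalIntegrable a b).1,
        L.integrable_comp (hf'.intervalIntegrable a b).2⟩
      fun x ↦ by rw [hf_a x, map_add, L.intervalIntegral_comp_comm (hf'.intervalIntegrable a x)]
  have hac : AbsolutelyContinuousOnInterval (‖f ·‖ ^ 2) a b := by
    have hre := hL Complex.reCLM
    have him := hL Complex.imCLM
    simp only [Complex.reCLM_apply, Complex.imCLM_apply] at hre him
    simp_rw [Complex.sq_norm, Complex.normSq_apply]
    exact (hre.fun_mul hre).fun_add (him.fun_mul him)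
  rw [← hac.integral_deriv_eq_sub]
  refine intervalIntegral.integral_congr_ae ?_
  filter_upwards [LocallyIntegrable.ae_hasDerivAt_integral hf'] with t ht _
  have hderiv : HasDerivAt f (f' t) t := by
    rw [funext hf]
    exact (ht 0).const_add _
  exact hderiv.norm_sq.deriv

theorem abs_norm_sq_sub_norm_sq_le {a b : ℝ} (hab : a ≤ b) :
    |‖f b‖ ^ 2 - ‖f a‖ ^ 2| ≤ 2 * ∫ t in a..b, ‖f t‖ * ‖f' t‖ := by
  have hcont : Continuous f := by
    rw [funext hf]
    exact continuous_const.add (intervalIntegral.continuous_primitive hf'.intervalIntegrable 0)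
  rw [norm_sq_sub_norm_sq_eq_integral_inner hf' hf, ← Real.norm_eq_abs,
    ← intervalIntegral.integral_const_mul]
  refine intervalIntegral.norm_integral_le_of_norm_le hab (ae_of_all _ fun t _ ↦ ?_)
    (((hf'.intervalIntegrable a b).norm.continuousOn_mul hcont.norm.continuousOn).const_mul 2)
  rw [norm_mul, Real.norm_two, Real.norm_eq_abs]
  gcongr
  exact abs_real_inner_le_norm _ _

theorem norm_sq_le_integral_norm_mul_norm (hf2 : Integrable (fun x ↦ ‖f x‖ ^ 2))
    (hff' : Integrable (fun x ↦ ‖f x‖ * ‖f' x‖)) (x : ℝ) :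
    ‖f x‖ ^ 2 ≤ ∫ t, ‖f t‖ * ‖f' t‖ := by
  refine le_of_forall_pos_le_add fun δ hδ ↦ ?_
  obtain ⟨a, hax, ha⟩ := exists_lt_of_integrableOn_of_measure_eq_top hf2.integrableOn
    (Real.volume_Iic (a := x)) hδ
  obtain ⟨b, hxb, hb⟩ := exists_lt_of_integrableOn_of_measure_eq_top hf2.integrableOn
    (Real.volume_Ici (a := x)) hδ
  have hleft := abs_le.mp (abs_norm_sq_sub_norm_sq_le hf' hf hax)
  have hright := abs_le.mp (abs_norm_sq_sub_norm_sq_le hf' hf hxb)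
  have hsplit := intervalIntegral.integral_add_adjacent_intervals (a := a) (b := x) (c := b)
    hff'.intervalIntegrable hff'.intervalIntegrable
  have hwhole : ∫ t in a..b, ‖f t‖ * ‖f' t‖ ≤ ∫ t, ‖f t‖ * ‖f' t‖ := by
    rw [intervalIntegral.integral_of_le (le_trans hax hxb)]
    exact setIntegral_le_integral hff' (ae_of_all _ fun t ↦ by positivity)
  linarith [hleft.2, hright.1]

end Primitive

theorem L2norm_sq {f : ℝ → ℂ} (hf : AEStronglyMeasurable f) :
    L2norm f ^ 2 = ∫ x, ‖f x‖ ^ 2 := by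
  rw [L2norm, toReal_eLpNorm hf,
    lpNorm_eq_integral_norm_rpow_toReal two_ne_zero ENNReal.ofNat_ne_top hf]
  simp only [ENNReal.toReal_ofNat, Real.rpow_two]
  exact Real.rpow_inv_natCast_pow (n := 2) (integral_nonneg fun x ↦ by positivity) two_ne_zero

theorem integral_norm_mul_norm_le_L2norm_mul {f g : ℝ → ℂ} (hf : MemLp f 2) (hg : MemLp g 2) :
    ∫ x, ‖f x‖ * ‖g x‖ ≤ L2norm f * L2norm g := by
  have h := integral_mul_norm_le_Lp_mul_Lq Real.HolderConjugate.two_two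
    (by simpa using hf) (by simpa using hg)
  rwa [L2norm, L2norm, toReal_eLpNorm hf.1, toReal_eLpNorm hg.1,
    lpNorm_eq_integral_norm_rpow_toReal two_ne_zero ENNReal.ofNat_ne_top hf.1,
    lpNorm_eq_integral_norm_rpow_toReal two_ne_zero ENNReal.ofNat_ne_top hg.1,
    ENNReal.toReal_ofNat, ← one_div]

theorem abs_Wint_le (μ : SignedMeasure ℝ) {ω : ℝ → ℝ} (hω : MemLp ω ⊤) {f : ℝ → ℝ} {M : ℝ}
    (hfM : ∀ x, |f x| ≤ M) (hf : Integrable f) :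
    |Wint μ ω f| ≤
      M * (μ.totalVariation Set.univ).toReal + (eLpNorm ω ⊤).toReal * ∫ x, |f x| := by
  have hbound (ν : Measure ℝ) [IsFiniteMeasure ν] : ‖∫ x, f x ∂ν‖ ≤ M * ν.real Set.univ :=
    norm_integral_le_of_norm_le_const (ae_of_all _ hfM)
  have hω_int : ‖∫ x, ω x * f x‖ ≤ (eLpNorm ω ⊤).toReal * ∫ x, |f x| := by
    rw [toReal_eLpNorm hω.1, ← integral_const_mul]
    refine norm_integral_le_of_norm_le (hf.abs.const_mul _) ?_
    filter_upwards [ae_le_lpNorm_exponent_top hω] with x hx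
    rw [norm_mul, Real.norm_eq_abs (f x)]
    exact mul_le_mul_of_nonneg_right hx (abs_nonneg _)
  have htv : (μ.totalVariation Set.univ).toReal =
      μ.toJordanDecomposition.posPart.real Set.univ +
        μ.toJordanDecomposition.negPart.real Set.univ := by
    rw [SignedMeasure.totalVariation, Measure.add_apply,
      ENNReal.toReal_add (measure_ne_top _ _) (measure_ne_top _ _)]
    rfl
  have hpos := abs_le.mp (hbound μ.toJordanDecomposition.posPart)
  have hneg := abs_le.mp (hbound μ.toJordanDecomposition.negPart)
  have hω' := abs_le.mp hω_int
  rw [Wint, htv, abs_le]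
  constructor <;> linarith

namespace H1

theorem integrable_norm_sq (φ : H1) : Integrable (fun x ↦ ‖φ.toFun x‖ ^ 2) :=
  (memLp_two_iff_integrable_sq_norm φ.memL2.1).mp φ.memL2

theorem integrable_norm_mul_norm_deriv (φ : H1) :
    Integrable (fun x ↦ ‖φ.toFun x‖ * ‖φ.deriv x‖) :=
  φ.memL2.norm.integrable_mul φ.deriv_memL2.norm

theorem norm_sq_le_integral (φ : H1) (x : ℝ) :
    ‖φ.toFun x‖ ^ 2 ≤ ∫ t, ‖φ.toFun t‖ * ‖φ.deriv t‖ :=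
  norm_sq_le_integral_norm_mul_norm (φ.deriv_memL2.locallyIntegrable one_le_two)
    φ.integral_deriv φ.integrable_norm_sq φ.integrable_norm_mul_norm_deriv x

theorem integral_norm_pow_four_le (φ : H1) :
    ∫ x, ‖φ.toFun x‖ ^ 4 ≤ (∫ t, ‖φ.toFun t‖ * ‖φ.deriv t‖) * L2norm φ.toFun ^ 2 := by
  rw [L2norm_sq φ.memL2.1, ← integral_const_mul]
  refine integral_mono_of_nonneg (ae_of_all _ fun x ↦ by positivity)
    (φ.integrable_norm_sq.const_mul _) (ae_of_all _ fun x ↦ ?_)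
  dsimp only
  rw [show ‖φ.toFun x‖ ^ 4 = ‖φ.toFun x‖ ^ 2 * ‖φ.toFun x‖ ^ 2 by ring]
  exact mul_le_mul_of_nonneg_right (φ.norm_sq_le_integral x) (by positivity)

theorem pekarEps_ge_sub_integral_norm_mul {α β : ℝ} (hα : 0 ≤ α) (hβ : 0 ≤ β)
    (μ : SignedMeasure ℝ) {ω : ℝ → ℝ} (hω : MemLp ω ⊤) (ε : ℝ) (φ : H1) :
    pekarEps α β μ ω ε φ ≥ L2norm φ.deriv ^ 2 - (∫ t, ‖φ.toFun t‖ * ‖φ.deriv t‖) *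
        (α / 2 * L2norm φ.toFun ^ 2 + |ε| * (μ.totalVariation Set.univ).toReal + β) -
      |ε| * (eLpNorm ω ⊤).toReal * L2norm φ.toFun ^ 2 := by
  set P := ∫ t, ‖φ.toFun t‖ * ‖φ.deriv t‖
  have hW := abs_Wint_le μ hω (f := fun x ↦ ‖φ.toFun x‖ ^ 2) (M := P)
    (fun x ↦ (abs_of_nonneg (by positivity)).trans_le (φ.norm_sq_le_integral x))
    φ.integrable_norm_sq
  simp only [abs_pow, abs_norm, ← L2norm_sq φ.memL2.1] at hW
  have hεW : ε * Wint μ ω (fun x ↦ ‖φ.toFun x‖ ^ 2) ≤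
      |ε| * (P * (μ.totalVariation Set.univ).toReal +
        (eLpNorm ω ⊤).toReal * L2norm φ.toFun ^ 2) :=
    (le_abs_self _).trans ((abs_mul _ _).trans_le (mul_le_mul_of_nonneg_left hW (abs_nonneg ε)))
  have hquartic :=
    mul_le_mul_of_nonneg_left φ.integral_norm_pow_four_le (div_nonneg hα zero_le_two)
  have hpoint := mul_le_mul_of_nonneg_left (φ.norm_sq_le_integral 0) hβ
  rw [pekarEps, pekarE0, L2norm_sq φ.deriv_memL2.1]
  linarith

theorem pekarEps_ge_coercive {α β : ℝ} (hα : 0 ≤ α) (hβ : 0 ≤ β) (μ : SignedMeasure ℝ)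
    {ω : ℝ → ℝ} (hω : MemLp ω ⊤) (ε : ℝ) (φ : H1) :
    pekarEps α β μ ω ε φ ≥ 3 / 4 * L2norm φ.deriv ^ 2 -
      L2norm φ.toFun ^ 2 *
        (α / 2 * L2norm φ.toFun ^ 2 + |ε| * (μ.totalVariation Set.univ).toReal + β) ^ 2 -
      |ε| * (eLpNorm ω ⊤).toReal * L2norm φ.toFun ^ 2 := by
  have hE := φ.pekarEps_ge_sub_integral_norm_mul hα hβ μ hω ε
  have hP := integral_norm_mul_norm_le_L2norm_mul φ.memL2 φ.deriv_memL2
  set C := α / 2 * L2norm φ.toFun ^ 2 + |ε| * (μ.totalVariation Set.univ).toReal + β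
  have hC : 0 ≤ C := by positivity
  linarith [mul_le_mul_of_nonneg_right hP hC,
    sq_nonneg (L2norm φ.deriv - 2 * L2norm φ.toFun * C)]

end H1

/-- **Coercivity lower bound for the perturbed functional:** for every `φ ∈ H¹(ℝ)`,
`E_ε(φ) ≥ (3/4)‖φ′‖₂² − ‖φ‖₂²((α/2)‖φ‖₂² + |ε||μ|(ℝ) + β)² − |ε|‖ω‖_∞‖φ‖₂²`;
in particular `e_ε > −∞`. -/
theorem pekarEps_lower_bound (α β : ℝ) (hα : 0 ≤ α) (hβ : 0 < β)
    (μ : MeasureTheory.SignedMeasure ℝ) (ω : ℝ → ℝ) (hω : MemLp ω ⊤ (volume : Measure ℝ))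
    (ε : ℝ) :
    (∀ φ : H1, pekarEps α β μ ω ε φ ≥
        3 / 4 * L2norm φ.deriv ^ 2 -
          L2norm φ.toFun ^ 2 *
            (α / 2 * L2norm φ.toFun ^ 2 + |ε| * (μ.totalVariation Set.univ).toReal + β) ^ 2 -
          |ε| * (eLpNorm ω ⊤ (volume : Measure ℝ)).toReal * L2norm φ.toFun ^ 2) ∧
      BddBelow { r : ℝ | ∃ φ : H1, L2norm φ.toFun = 1 ∧ pekarEps α β μ ω ε φ = r } := by
  have hbound (φ : H1) := φ.pekarEps_ge_coercive hα hβ.le μ hω ε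
  refine ⟨hbound, -((α / 2 + |ε| * (μ.totalVariation Set.univ).toReal + β) ^ 2 +
    |ε| * (eLpNorm ω ⊤ (volume : Measure ℝ)).toReal), ?_⟩
  rintro r ⟨φ, hφ, rfl⟩
  have h := hbound φ
  rw [hφ] at h
  linarith [sq_nonneg (L2norm φ.deriv)]
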